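/- For an integer j ≥ 0, let z_j := (2j+3) − 2√((j+1)(j+2)) ∈ (0,1), and for real z ∈ [0, z_j] define M_j(z) := (1 + (2j²+4j+1)z − √(z² − (4j+6)z + 1)) / (2(j+1)(j+2)). Then for every integer k ≥ 1 there exists ε > 0 such that for all real z with 0 ≤ z < ε one has 0 ≤ M_k(z) ≤ z_{k−1} and M_{k−1}(M_k(z)) = 2·M_k(z) − z; equivalently, the identity M_k(z) = z + M_{k−1}(M_k(z)) − M_k(z) holds for all z in a neighbourhood of 0. -/

import Mathlib

/-- `z_j`, the smaller root of `z² - (4j+6)z + 1`. -/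
noncomputable def zcrit (j : ℕ) : ℝ :=
  (2 * (j : ℝ) + 3) - 2 * Real.sqrt (((j : ℝ) + 1) * ((j : ℝ) + 2))

/-- The closed form `M_j(z)` for the generating function of `j`-coloured marked trees. -/
noncomputable def Mgen (j : ℕ) (z : ℝ) : ℝ :=
  (1 + (2 * (j : ℝ) ^ 2 + 4 * (j : ℝ) + 1) * z -
      Real.sqrt (z ^ 2 - (4 * (j : ℝ) + 6) * z + 1)) /
    (2 * ((j : ℝ) + 1) * ((j : ℝ) + 2))

/-!
`M_j(z)` is the smaller root `w` of the quadratic `P_j(w, z) = 0` (`MgenPoly j w z = 0`). The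
substitution `(w, z) ↦ (2w - z, w)` carries `P_{j+1}` to `P_j` identically, so `w = M_{j+1}(z)` makes
`2w - z` a root of `P_j(·, w)`. For `z` near `0` both `w` and `2w - z` are near `0`, far below the
larger root (which is near `1 / (j+1)(j+2)`), so `2w - z` is the smaller root, i.e. `M_j(w)`.
-/

open Filter Topology

noncomputable def MgenPoly (j : ℕ) (w z : ℝ) : ℝ :=
  ((j : ℝ) + 1) * ((j : ℝ) + 2) * w ^ 2 - (1 + (2 * (j : ℝ) ^ 2 + 4 * (j : ℝ) + 1) * z) * w +
    (j : ℝ) * ((j : ℝ) + 1) * z ^ 2 + z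

theorem MgenPoly_succ (j : ℕ) (w z : ℝ) : MgenPoly (j + 1) w z = MgenPoly j (2 * w - z) w := by
  unfold MgenPoly
  push_cast
  ring

theorem MgenPoly_eq_sq_sub_disc (j : ℕ) (w z : ℝ) :
    4 * ((j : ℝ) + 1) * ((j : ℝ) + 2) * MgenPoly j w z =
      (2 * ((j : ℝ) + 1) * ((j : ℝ) + 2) * w - 1 - (2 * (j : ℝ) ^ 2 + 4 * (j : ℝ) + 1) * z) ^ 2 -
        (z ^ 2 - (4 * (j : ℝ) + 6) * z + 1) := by
  unfold MgenPoly
  ring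

theorem MgenPoly_Mgen (j : ℕ) {z : ℝ} (hz : 0 ≤ z ^ 2 - (4 * (j : ℝ) + 6) * z + 1) :
    MgenPoly j (Mgen j z) z = 0 := by
  have hc : (0 : ℝ) < 2 * ((j : ℝ) + 1) * ((j : ℝ) + 2) := by positivity
  have hM : 2 * ((j : ℝ) + 1) * ((j : ℝ) + 2) * Mgen j z - 1 -
      (2 * (j : ℝ) ^ 2 + 4 * (j : ℝ) + 1) * z = -Real.sqrt (z ^ 2 - (4 * (j : ℝ) + 6) * z + 1) := by
    rw [Mgen, mul_div_cancel₀ _ hc.ne']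
    ring
  have h := MgenPoly_eq_sq_sub_disc j (Mgen j z) z
  rw [hM, neg_sq, Real.sq_sqrt hz, sub_self] at h
  exact (mul_eq_zero.1 h).resolve_left (by positivity)

/-- Any root of `P_j(·, z)` at most half the sum of the roots is `M_j(z)`. -/
theorem Mgen_eq_of_MgenPoly_eq_zero (j : ℕ) {w z : ℝ} (hw : MgenPoly j w z = 0)
    (hsmall : 2 * ((j : ℝ) + 1) * ((j : ℝ) + 2) * w ≤ 1 + (2 * (j : ℝ) ^ 2 + 4 * (j : ℝ) + 1) * z) :
    Mgen j z = w := by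
  have hc : (0 : ℝ) < 2 * ((j : ℝ) + 1) * ((j : ℝ) + 2) := by positivity
  have hdisc : z ^ 2 - (4 * (j : ℝ) + 6) * z + 1 =
      (1 + (2 * (j : ℝ) ^ 2 + 4 * (j : ℝ) + 1) * z - 2 * ((j : ℝ) + 1) * ((j : ℝ) + 2) * w) ^ 2 := by
    linear_combination MgenPoly_eq_sq_sub_disc j w z - 4 * ((j : ℝ) + 1) * ((j : ℝ) + 2) * hw
  rw [Mgen, hdisc, Real.sqrt_sq (sub_nonneg.2 hsmall), div_eq_iff hc.ne']
  ring

theorem Mgen_nonneg (j : ℕ) {z : ℝ} (hz : 0 ≤ z) : 0 ≤ Mgen j z := by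
  unfold Mgen
  refine div_nonneg (sub_nonneg.2 (Real.sqrt_le_iff.2 ⟨by positivity, ?_⟩)) (by positivity)
  nlinarith [mul_nonneg (sq_nonneg z) (by positivity : (0 : ℝ) ≤ 4 * j * (j + 2) * (j + 1) ^ 2),
    mul_nonneg hz (by positivity : (0 : ℝ) ≤ 4 * (j + 1) * (j + 2))]

theorem continuous_Mgen (j : ℕ) : Continuous (Mgen j) := by
  unfold Mgen
  fun_prop

theorem Mgen_zero (j : ℕ) : Mgen j 0 = 0 := by
  simp [Mgen]

theorem zcrit_pos (j : ℕ) : 0 < zcrit j := by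
  have h : Real.sqrt (((j : ℝ) + 1) * ((j : ℝ) + 2)) < (2 * (j : ℝ) + 3) / 2 := by
    rw [Real.sqrt_lt' (by positivity)]
    nlinarith
  unfold zcrit
  linarith

theorem tendsto_Mgen_nhds_zero (j : ℕ) : Tendsto (Mgen j) (𝓝 0) (𝓝 0) := by
  simpa only [Mgen_zero] using (continuous_Mgen j).tendsto 0

theorem eventually_Mgen_Mgen_succ (j : ℕ) :
    ∀ᶠ z in 𝓝 0, Mgen (j + 1) z ≤ zcrit j ∧ Mgen j (Mgen (j + 1) z) = 2 * Mgen (j + 1) z - z := by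
  have hdisc : ∀ᶠ z in 𝓝 (0 : ℝ), 0 ≤ z ^ 2 - (4 * ((j + 1 : ℕ) : ℝ) + 6) * z + 1 :=
    (continuous_id.pow 2 |>.sub (continuous_const.mul continuous_id) |>.add continuous_const)
      |>.continuousAt.eventually (Ici_mem_nhds (by norm_num))
  have hsmall : ∀ᶠ z in 𝓝 (0 : ℝ), 2 * ((j : ℝ) + 1) * ((j : ℝ) + 2) * (2 * Mgen (j + 1) z - z) ≤
      1 + (2 * (j : ℝ) ^ 2 + 4 * (j : ℝ) + 1) * Mgen (j + 1) z := by
    have h : Tendsto (fun z ↦ 2 * ((j : ℝ) + 1) * ((j : ℝ) + 2) * (2 * Mgen (j + 1) z - z) -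
        (2 * (j : ℝ) ^ 2 + 4 * (j : ℝ) + 1) * Mgen (j + 1) z) (𝓝 0) (𝓝 0) := by
      simpa using ((tendsto_Mgen_nhds_zero (j + 1)).const_mul 2 |>.sub tendsto_id |>.const_mul
        (2 * ((j : ℝ) + 1) * ((j : ℝ) + 2))).sub
          ((tendsto_Mgen_nhds_zero (j + 1)).const_mul (2 * (j : ℝ) ^ 2 + 4 * (j : ℝ) + 1))
    filter_upwards [h.eventually (Iic_mem_nhds one_pos)] with z hz
    linarith
  filter_upwards [hdisc, hsmall, (tendsto_Mgen_nhds_zero (j + 1)).eventually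
    (Iic_mem_nhds (zcrit_pos j))] with z hz hsmall hcrit
  refine ⟨hcrit, Mgen_eq_of_MgenPoly_eq_zero j ?_ hsmall⟩
  rw [← MgenPoly_succ, MgenPoly_Mgen (j + 1) hz]

/-- For every `k ≥ 1` there is `ε > 0` such that for `0 ≤ z < ε` one has
`0 ≤ M_k(z) ≤ z_{k-1}` and `M_{k-1}(M_k(z)) = 2 M_k(z) - z`; i.e. the identity
`M_k(z) = z + M_{k-1}(M_k(z)) - M_k(z)` holds near `0`. -/
theorem Mgen_functional_equation :
    ∀ k : ℕ, 1 ≤ k → ∃ ε : ℝ, 0 < ε ∧ ∀ z : ℝ, 0 ≤ z → z < ε →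
      0 ≤ Mgen k z ∧ Mgen k z ≤ zcrit (k - 1) ∧
      Mgen (k - 1) (Mgen k z) = 2 * Mgen k z - z := by
  intro k hk
  obtain ⟨j, rfl⟩ := Nat.exists_eq_add_of_le' hk
  obtain ⟨ε, hε, hball⟩ := Metric.eventually_nhds_iff.1 (eventually_Mgen_Mgen_succ j)
  refine ⟨ε, hε, fun z hz0 hzε ↦ ?_⟩
  have hdist : dist z 0 < ε := by rwa [Real.dist_0_eq_abs, abs_of_nonneg hz0]
  simpa only [Nat.add_sub_cancel] using ⟨Mgen_nonneg (j + 1) hz0, hball hdist⟩
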